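/- arXiv:2511.03512 — 4 statements merged into one kernel-verified Lean document; each statement's English description precedes it below -/
import Mathlib

section
/- Every antiholomorphic involution of the open unit disc D has a fixed point and is conjugate, via a biholomorphic automorphism of D, to complex conjugation z ↦ z̄. -/
open Set Metric

open Asymptotics

noncomputable def Complex.abs : AbsoluteValue ℂ ℝ := NormedField.toAbsoluteValue ℂ

lemma Complex.norm_eq_abs (z : ℂ) : ‖z‖ = Complex.abs z := rfl

@[simp] lemma Complex.abs_conj (z : ℂ) : Complex.abs ((starRingEnd ℂ) z) = Complex.abs z :=
  RCLike.norm_conj z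

@[simp] lemma Complex.abs_ofReal (r : ℝ) : Complex.abs (r : ℂ) = |r| := Complex.norm_real r

@[simp] lemma Complex.abs_two : Complex.abs (2 : ℂ) = 2 := by
  rw [← Complex.norm_eq_abs]; norm_num

lemma Complex.abs_le_abs_of_mapsTo_ball_self {f : ℂ → ℂ} {z : ℂ}
    (hd : DifferentiableOn ℂ f (ball 0 1)) (h_maps : MapsTo f (ball 0 1) (ball 0 1))
    (h₀ : f 0 = 0) (hz : Complex.abs z < 1) : Complex.abs (f z) ≤ Complex.abs z :=
  Complex.norm_le_norm_of_mapsTo_ball hd (h_maps.mono_right ball_subset_closedBall) h₀ hz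


lemma one_sub_ne' {u : ℂ} (h : Complex.abs u < 1) : 1 - u ≠ 0 := by
  intro h0
  have : u = 1 := by linear_combination -h0
  rw [this] at h; simp at h

lemma one_add_ne' {u : ℂ} (h : Complex.abs u < 1) : 1 + u ≠ 0 := by
  intro h0
  have : u = -1 := by linear_combination h0
  rw [this] at h
  rw [AbsoluteValue.map_neg, map_one] at h
  linarith

lemma mul_abs_lt {a b : ℂ} (ha : Complex.abs a < 1) (hb : Complex.abs b < 1) :
    Complex.abs (a * b) < 1 := by
  rw [map_mul]
  nlinarith [Complex.abs.nonneg a, Complex.abs.nonneg b]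

lemma mob_lt {a z : ℂ} (ha : Complex.abs a < 1) (hz : Complex.abs z < 1) :
    Complex.abs ((z - a) / (1 - (starRingEnd ℂ) a * z)) < 1 := by
  have hkey : Complex.normSq (1 - (starRingEnd ℂ) a * z) - Complex.normSq (z - a)
      = (1 - Complex.normSq a) * (1 - Complex.normSq z) := by
    simp only [Complex.normSq_apply, Complex.sub_re, Complex.sub_im, Complex.mul_re,
      Complex.mul_im, Complex.one_re, Complex.one_im, Complex.conj_re, Complex.conj_im]
    ring
  have h1 : Complex.normSq a = Complex.abs a ^ 2 := (Complex.sq_norm a).symm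
  have h2 : Complex.normSq z = Complex.abs z ^ 2 := (Complex.sq_norm z).symm
  have hd : 1 - (starRingEnd ℂ) a * z ≠ 0 := by
    apply one_sub_ne'
    rw [map_mul, Complex.abs_conj]
    nlinarith [Complex.abs.nonneg a, Complex.abs.nonneg z]
  rw [map_div₀, div_lt_one (Complex.abs.pos hd)]
  refine lt_of_pow_lt_pow_left₀ 2 (Complex.abs.nonneg _) ?_
  have hnum : Complex.abs (z - a) ^ 2 = Complex.normSq (z - a) := Complex.sq_norm (z - a)
  have hden : Complex.abs (1 - (starRingEnd ℂ) a * z) ^ 2 = Complex.normSq (1 - (starRingEnd ℂ) a * z) :=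
    Complex.sq_norm (1 - (starRingEnd ℂ) a * z)
  have hp1 : (0:ℝ) < 1 - Complex.abs a ^ 2 := by nlinarith [Complex.abs.nonneg a]
  have hp2 : (0:ℝ) < 1 - Complex.abs z ^ 2 := by nlinarith [Complex.abs.nonneg z]
  nlinarith [mul_pos hp1 hp2]

lemma mob_inv {a z : ℂ} (ha : Complex.abs a < 1) (hz : Complex.abs z < 1) :
    ((z - a) / (1 - (starRingEnd ℂ) a * z) + a)
      / (1 + (starRingEnd ℂ) a * ((z - a) / (1 - (starRingEnd ℂ) a * z))) = z := by
  have hd : 1 - (starRingEnd ℂ) a * z ≠ 0 :=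
    one_sub_ne' (mul_abs_lt (by rwa [Complex.abs_conj]) hz)
  have h3 : 1 - (starRingEnd ℂ) a * a ≠ 0 :=
    one_sub_ne' (mul_abs_lt (by rwa [Complex.abs_conj]) ha)
  have h2 : 1 + (starRingEnd ℂ) a * ((z - a) / (1 - (starRingEnd ℂ) a * z))
      = (1 - (starRingEnd ℂ) a * a) / (1 - (starRingEnd ℂ) a * z) := by
    field_simp
    ring
  have h4 : (z - a) / (1 - (starRingEnd ℂ) a * z) + a
      = z * (1 - (starRingEnd ℂ) a * a) / (1 - (starRingEnd ℂ) a * z) := by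
    rw [div_add' _ _ _ hd]
    congr 1
    ring
  rw [h2, h4, div_div_div_cancel_right₀ hd, mul_div_assoc, div_self h3, mul_one]

lemma hasDerivAt_conj_conj {f : ℂ → ℂ} {d z : ℂ} (h : HasDerivAt f d ((starRingEnd ℂ) z)) :
    HasDerivAt (fun w => (starRingEnd ℂ) (f ((starRingEnd ℂ) w))) ((starRingEnd ℂ) d) z := by
  rw [hasDerivAt_iff_isLittleO] at h ⊢
  have hc : Filter.Tendsto (fun w : ℂ => (starRingEnd ℂ) w) (nhds z) (nhds ((starRingEnd ℂ) z)) :=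
    (Complex.continuous_conj).tendsto z
  have h2 := h.comp_tendsto hc
  rw [← isLittleO_norm_norm] at h2 ⊢
  refine h2.congr (fun w => ?_) (fun w => ?_)
  · have : (starRingEnd ℂ) (f ((starRingEnd ℂ) w)) - (starRingEnd ℂ) (f ((starRingEnd ℂ) z))
        - (w - z) • (starRingEnd ℂ) d
        = (starRingEnd ℂ) (f ((starRingEnd ℂ) w) - f ((starRingEnd ℂ) z)
            - ((starRingEnd ℂ) w - (starRingEnd ℂ) z) • d) := by
      simp only [map_sub, smul_eq_mul, map_mul, Complex.conj_conj]
    rw [this, RCLike.norm_conj]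
    rfl
  · have : w - z = (starRingEnd ℂ) ((starRingEnd ℂ) w - (starRingEnd ℂ) z) := by
      simp [map_sub]
    rw [this, RCLike.norm_conj]
    rfl

lemma diffOn_conj_conj {f : ℂ → ℂ} (hf : DifferentiableOn ℂ f (ball 0 1)) :
    DifferentiableOn ℂ (fun w => (starRingEnd ℂ) (f ((starRingEnd ℂ) w))) (ball 0 1) := by
  intro z hz
  have hz' : (starRingEnd ℂ) z ∈ ball (0:ℂ) 1 := by
    simp only [mem_ball_zero_iff] at hz ⊢
    rwa [RCLike.norm_conj]
  have hd := (hf.differentiableAt (isOpen_ball.mem_nhds hz')).hasDerivAt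
  exact (hasDerivAt_conj_conj hd).differentiableAt.differentiableWithinAt

lemma schwarz_rot {f g : ℂ → ℂ} (hf : DifferentiableOn ℂ f (ball 0 1))
    (hfm : MapsTo f (ball 0 1) (ball 0 1)) (hg : DifferentiableOn ℂ g (ball 0 1))
    (hgm : MapsTo g (ball 0 1) (ball 0 1)) (hf0 : f 0 = 0)
    (hgf : ∀ z ∈ ball (0:ℂ) 1, g (f z) = z) :
    ∃ lam : ℂ, Complex.abs lam = 1 ∧ ∀ z ∈ ball (0:ℂ) 1, f z = lam * z := by
  have h0 : (0:ℂ) ∈ ball (0:ℂ) 1 := by simp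
  have hg0 : g 0 = 0 := by
    have := hgf 0 h0; rwa [hf0] at this
  have habs12 : Complex.abs ((1:ℂ)/2) < 1 := by
    rw [map_div₀]; simp; norm_num
  have hz₀ : (1/2 : ℂ) ∈ ball (0:ℂ) 1 := by
    rw [mem_ball_zero_iff, Complex.norm_eq_abs]; exact habs12
  have hfz₀ : Complex.abs (f (1/2)) < 1 := by
    have := hfm hz₀; rwa [mem_ball_zero_iff, Complex.norm_eq_abs] at this
  have h1 : Complex.abs (f (1/2)) ≤ Complex.abs ((1:ℂ)/2) :=
    Complex.abs_le_abs_of_mapsTo_ball_self hf hfm hf0 habs12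
  have h2 : Complex.abs (g (f (1/2))) ≤ Complex.abs (f (1/2)) :=
    Complex.abs_le_abs_of_mapsTo_ball_self hg hgm hg0 hfz₀
  rw [hgf _ hz₀] at h2
  have heq : Complex.abs (f (1/2)) = Complex.abs ((1:ℂ)/2) := le_antisymm h1 h2
  have hne : (1/2 : ℂ) ≠ 0 := by norm_num
  have hds : dslope f 0 (1/2) = f (1/2) / (1/2) := by
    rw [dslope_of_ne _ hne, slope_def_field, hf0]
    simp
  have habsval : Complex.abs ((1:ℂ)/2) = 1/2 := by
    rw [map_div₀, map_one, Complex.abs_two]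
  have hnorm : ‖dslope f 0 (1/2)‖ = 1 / 1 := by
    rw [hds, Complex.norm_eq_abs, map_div₀, heq, habsval]
    norm_num
  have hmaps' : MapsTo f (ball 0 1) (ball (f 0) 1) := by rwa [hf0]
  have key := Complex.affine_of_mapsTo_ball_of_exists_norm_dslope_eq_div hf (hmaps'.mono_right ball_subset_closedBall) hz₀ hnorm
  refine ⟨dslope f 0 (1/2), ?_, fun z hz => ?_⟩
  · rw [← Complex.norm_eq_abs, hnorm]; norm_num
  · have := key hz
    simp only [hf0, sub_zero, zero_add, smul_eq_mul] at this
    rw [this, mul_comm]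

/-- Every antiholomorphic involution `ζ` of the open unit disc has a fixed point and is
conjugate, via an automorphism `φ(z) = λ(z-α)/(1-ᾱz)` of the disc, to complex conjugation:
`φ ∘ ζ = conj ∘ φ` on `D`. -/
theorem stmt2 (ζ : ℂ → ℂ) (hbij : BijOn ζ (ball 0 1) (ball 0 1))
    (hinvol : ∀ z ∈ ball (0 : ℂ) 1, ζ (ζ z) = z)
    (hanti : DifferentiableOn ℂ (fun z => ζ (starRingEnd ℂ z)) (ball 0 1)) :
    (∃ z₀ ∈ ball (0 : ℂ) 1, ζ z₀ = z₀) ∧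
      ∃ lam alf : ℂ, ‖lam‖ = 1 ∧ alf ∈ ball (0 : ℂ) 1 ∧
        ∀ z ∈ ball (0 : ℂ) 1,
          lam * ((ζ z - alf) / (1 - starRingEnd ℂ alf * ζ z)) =
            starRingEnd ℂ (lam * ((z - alf) / (1 - starRingEnd ℂ alf * z))) := by
  have h0m : (0:ℂ) ∈ ball (0:ℂ) 1 := by simp
  have habsz : ∀ z : ℂ, z ∈ ball (0:ℂ) 1 ↔ Complex.abs z < 1 := fun z => by
    rw [mem_ball_zero_iff, Complex.norm_eq_abs]
  have hconjm : ∀ z : ℂ, z ∈ ball (0:ℂ) 1 → (starRingEnd ℂ) z ∈ ball (0:ℂ) 1 := fun z hz => by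
    rw [habsz] at hz ⊢; rwa [Complex.abs_conj]
  have hζm : ∀ w, w ∈ ball (0:ℂ) 1 → ζ w ∈ ball (0:ℂ) 1 := fun w hw => hbij.mapsTo hw
  have hζa : ∀ w, w ∈ ball (0:ℂ) 1 → Complex.abs (ζ w) < 1 :=
    fun w hw => (habsz _).mp (hζm w hw)
  have hβa : Complex.abs (ζ 0) < 1 := hζa 0 h0m
  -- the holomorphic map f = M_{ζ 0} ∘ g where g z = ζ (conj z)
  have hfd : DifferentiableOn ℂ
      (fun z => (ζ ((starRingEnd ℂ) z) - ζ 0)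
        / (1 - (starRingEnd ℂ) (ζ 0) * ζ ((starRingEnd ℂ) z))) (ball 0 1) := by
    refine DifferentiableOn.div (hanti.sub_const _)
      ((differentiableOn_const _).sub ((differentiableOn_const _).mul hanti)) ?_
    intro z hz
    exact one_sub_ne' (mul_abs_lt (by rwa [Complex.abs_conj]) (hζa _ (hconjm _ hz)))
  have hfm' : MapsTo
      (fun z => (ζ ((starRingEnd ℂ) z) - ζ 0)
        / (1 - (starRingEnd ℂ) (ζ 0) * ζ ((starRingEnd ℂ) z))) (ball 0 1) (ball 0 1) :=
    fun z hz => (habsz _).mpr (mob_lt hβa (hζa _ (hconjm _ hz)))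
  have hgdiff0 : DifferentiableOn ℂ (fun u => (starRingEnd ℂ) (ζ u)) (ball 0 1) := by
    have h := diffOn_conj_conj hanti
    exact h.congr (fun x hx => by rw [Complex.conj_conj])
  have hMd : DifferentiableOn ℂ
      (fun w => (w + ζ 0) / (1 + (starRingEnd ℂ) (ζ 0) * w)) (ball 0 1) := by
    refine DifferentiableOn.div (differentiableOn_id.add_const _)
      ((differentiableOn_const _).add ((differentiableOn_const _).mul differentiableOn_id)) ?_
    intro w hw
    exact one_add_ne' (mul_abs_lt (by rwa [Complex.abs_conj]) ((habsz _).mp hw))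
  have hMm : MapsTo (fun w => (w + ζ 0) / (1 + (starRingEnd ℂ) (ζ 0) * w))
      (ball 0 1) (ball 0 1) := by
    intro w hw
    have h := mob_lt (a := -(ζ 0)) (by rwa [AbsoluteValue.map_neg]) ((habsz _).mp hw)
    rw [map_neg, neg_mul, sub_neg_eq_add, sub_neg_eq_add] at h
    exact (habsz _).mpr h
  have hgd : DifferentiableOn ℂ
      (fun w => (starRingEnd ℂ) (ζ ((w + ζ 0) / (1 + (starRingEnd ℂ) (ζ 0) * w))))
      (ball 0 1) := by
    have := hgdiff0.comp hMd hMm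
    exact this
  have hgm' : MapsTo
      (fun w => (starRingEnd ℂ) (ζ ((w + ζ 0) / (1 + (starRingEnd ℂ) (ζ 0) * w))))
      (ball 0 1) (ball 0 1) := fun w hw => hconjm _ (hζm _ (hMm hw))
  have hf0' : (fun z => (ζ ((starRingEnd ℂ) z) - ζ 0)
      / (1 - (starRingEnd ℂ) (ζ 0) * ζ ((starRingEnd ℂ) z))) 0 = 0 := by
    simp
  have hgf' : ∀ z ∈ ball (0:ℂ) 1,
      (fun w => (starRingEnd ℂ) (ζ ((w + ζ 0) / (1 + (starRingEnd ℂ) (ζ 0) * w))))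
        ((fun z => (ζ ((starRingEnd ℂ) z) - ζ 0)
          / (1 - (starRingEnd ℂ) (ζ 0) * ζ ((starRingEnd ℂ) z))) z) = z := by
    intro z hz
    have hgz : Complex.abs (ζ ((starRingEnd ℂ) z)) < 1 := hζa _ (hconjm _ hz)
    have hstep := mob_inv (a := ζ 0) hβa hgz
    simp only []
    rw [hstep, hinvol _ (hconjm _ hz), Complex.conj_conj]
  obtain ⟨lam0, hlam0abs, hfeq⟩ := schwarz_rot hfd hfm' hgd hgm' hf0' hgf'
  have hlam0u : lam0 * (starRingEnd ℂ) lam0 = 1 := by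
    have h : Complex.normSq lam0 = 1 := by
      rw [Complex.normSq_eq_norm_sq, Complex.norm_eq_abs, hlam0abs]; norm_num
    rw [Complex.mul_conj, h]; norm_num
  set α : ℂ := -((starRingEnd ℂ) lam0) * ζ 0 with hαdef
  have hcα : (starRingEnd ℂ) α = -lam0 * (starRingEnd ℂ) (ζ 0) := by
    rw [hαdef, map_mul, map_neg, Complex.conj_conj]
  have hαa : Complex.abs α < 1 := by
    rw [hαdef, map_mul, AbsoluteValue.map_neg, Complex.abs_conj, hlam0abs, one_mul]
    exact hβa
  have hform : ∀ z ∈ ball (0:ℂ) 1,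
      ζ z * (1 - (starRingEnd ℂ) α * (starRingEnd ℂ) z) = lam0 * ((starRingEnd ℂ) z - α) := by
    intro z hz
    have h5 := hfeq _ (hconjm _ hz)
    simp only [Complex.conj_conj] at h5
    have hD : 1 - (starRingEnd ℂ) (ζ 0) * ζ z ≠ 0 :=
      one_sub_ne' (mul_abs_lt (by rwa [Complex.abs_conj]) (hζa z hz))
    rw [div_eq_iff hD] at h5
    linear_combination h5 + lam0 * hαdef - (ζ z * (starRingEnd ℂ) z) * hcα
      - ζ 0 * hlam0u
  -- derive conj α = -lam0 * α
  have hβm : ζ 0 ∈ ball (0:ℂ) 1 := hζm 0 h0m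
  have hlam0ne : lam0 ≠ 0 := by
    intro h; rw [h] at hlam0abs; simp at hlam0abs
  have h7 : (starRingEnd ℂ) (ζ 0) = α := by
    have h6 := hform (ζ 0) hβm
    rw [hinvol 0 h0m, zero_mul] at h6
    have h8 : (starRingEnd ℂ) (ζ 0) - α = 0 := by
      rcases mul_eq_zero.mp h6.symm with h | h
      · exact absurd h hlam0ne
      · exact h
    linear_combination h8
  have hrel2 : (starRingEnd ℂ) α = -lam0 * α := by
    have hβα : ζ 0 = -lam0 * α := by
      linear_combination lam0 * hαdef - ζ 0 * hlam0u
    have h11 := congrArg (starRingEnd ℂ) h7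
    rw [Complex.conj_conj] at h11
    rw [← h11]
    exact hβα
  -- square root of -lam0
  obtain ⟨μ, hμsq⟩ : ∃ μ : ℂ, μ ^ 2 = -lam0 :=
    IsAlgClosed.exists_pow_nat_eq (-lam0) (n := 2) (by norm_num)
  have hμabs : Complex.abs μ = 1 := by
    have h8 : Complex.abs μ ^ 2 = 1 := by
      rw [← map_pow, hμsq, AbsoluteValue.map_neg, hlam0abs]
    nlinarith [Complex.abs.nonneg μ]
  have hμν : μ * (starRingEnd ℂ) μ = 1 := by
    have h : Complex.normSq μ = 1 := by
      rw [Complex.normSq_eq_norm_sq, Complex.norm_eq_abs, hμabs]; norm_num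
    rw [Complex.mul_conj, h]; norm_num
  -- μ * α is real
  have hs : (starRingEnd ℂ) (μ * α) = μ * α := by
    rw [map_mul]
    linear_combination ((starRingEnd ℂ) μ) * hrel2 - α * ((starRingEnd ℂ) μ) * hμsq
      + α * μ * hμν
  have hsr := Complex.conj_eq_iff_re.mp hs
  set sr : ℝ := (μ * α).re with hsrdef
  -- hsr : (sr : ℂ) = μ * α
  have hsra : |sr| < 1 := by
    have h9 := congrArg Complex.abs hsr
    rw [Complex.abs_ofReal, map_mul, hμabs, one_mul] at h9
    rw [h9]; exact hαa
  set c : ℝ := Real.sqrt (1 - sr ^ 2) with hcdef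
  have hsr2 : sr ^ 2 < 1 := by nlinarith [abs_nonneg sr, sq_abs sr]
  have hc2 : c ^ 2 = 1 - sr ^ 2 := Real.sq_sqrt (by nlinarith)
  have hcnn : 0 ≤ c := Real.sqrt_nonneg _
  have h1c : (0:ℝ) < 1 + c := by linarith
  set t : ℝ := sr / (1 + c) with htdef
  have hq : sr * t ^ 2 - 2 * t + sr = 0 := by
    rw [htdef]
    field_simp
    linear_combination sr * hc2
  have htlt : |t| < 1 := by
    rw [htdef, abs_div, abs_of_pos h1c]
    calc |sr| / (1 + c) ≤ |sr| := div_le_self (abs_nonneg sr) (by linarith)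
      _ < 1 := hsra
  have hqC : (sr:ℂ) * (t:ℂ) ^ 2 - 2 * (t:ℂ) + (sr:ℂ) = 0 := by
    exact_mod_cast congrArg (fun x : ℝ => (x:ℂ)) hq
  have hz₀a : Complex.abs ((t:ℂ) * μ) < 1 := by
    rw [map_mul, hμabs, mul_one, Complex.abs_ofReal]; exact htlt
  have hz₀m : (t:ℂ) * μ ∈ ball (0:ℂ) 1 := (habsz _).mpr hz₀a
  have hα2 : α = (sr:ℂ) * (starRingEnd ℂ) μ := by
    linear_combination -((starRingEnd ℂ) μ) * hsr - α * hμν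
  have hcα2 : (starRingEnd ℂ) α = (sr:ℂ) * μ := by
    rw [hα2, map_mul, Complex.conj_conj, Complex.conj_ofReal]
  have hN : ∀ z ∈ ball (0:ℂ) 1,
      ζ z * (1 - (sr:ℂ) * μ * (starRingEnd ℂ) z)
        = -μ ^ 2 * ((starRingEnd ℂ) z - (sr:ℂ) * (starRingEnd ℂ) μ) := by
    intro z hz
    have h9 := hform z hz
    rw [hcα2, hα2] at h9
    linear_combination h9 + ((starRingEnd ℂ) z - (sr:ℂ) * (starRingEnd ℂ) μ) * hμsq
  have hcz₀ : (starRingEnd ℂ) ((t:ℂ) * μ) = (t:ℂ) * (starRingEnd ℂ) μ := by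
    rw [map_mul, Complex.conj_ofReal]
  have hfix : ζ ((t:ℂ) * μ) = (t:ℂ) * μ := by
    have h10 := hN _ hz₀m
    rw [hcz₀] at h10
    have hDd0 : 1 - (sr:ℂ) * μ * ((t:ℂ) * (starRingEnd ℂ) μ) ≠ 0 := by
      apply one_sub_ne'
      rw [map_mul, map_mul, map_mul, Complex.abs_ofReal, Complex.abs_ofReal, hμabs,
        Complex.abs_conj, hμabs]
      nlinarith [abs_nonneg sr, abs_nonneg t]
    apply mul_right_cancel₀ hDd0
    rw [h10]
    linear_combination (-(t:ℂ) * μ + (sr:ℂ) * μ + (sr:ℂ) * (t:ℂ) ^ 2 * μ) * hμν + μ * hqC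
  -- square root of conj lam0
  obtain ⟨lam, hlamsq⟩ : ∃ l : ℂ, l ^ 2 = (starRingEnd ℂ) lam0 :=
    IsAlgClosed.exists_pow_nat_eq ((starRingEnd ℂ) lam0) (n := 2) (by norm_num)
  have hlamabs : Complex.abs lam = 1 := by
    have h8 : Complex.abs lam ^ 2 = 1 := by
      rw [← map_pow, hlamsq, Complex.abs_conj, hlam0abs]
    nlinarith [Complex.abs.nonneg lam]
  have hlamu : lam * (starRingEnd ℂ) lam = 1 := by
    have h : Complex.normSq lam = 1 := by
      rw [Complex.normSq_eq_norm_sq, Complex.norm_eq_abs, hlamabs]; norm_num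
    rw [Complex.mul_conj, h]; norm_num
  have hclam2 : ((starRingEnd ℂ) lam) ^ 2 = lam0 := by
    have h := congrArg (starRingEnd ℂ) hlamsq
    rwa [map_pow, Complex.conj_conj] at h
  have hlamμ : lam * -μ ^ 2 = (starRingEnd ℂ) lam := by
    linear_combination -lam * hclam2 + ((starRingEnd ℂ) lam) * hlamu - lam * hμsq
  refine ⟨⟨(t:ℂ) * μ, hz₀m, hfix⟩, lam, (t:ℂ) * μ, hlamabs, hz₀m, fun z hz => ?_⟩
  rw [hcz₀]
  have hza : Complex.abs z < 1 := (habsz _).mp hz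
  have hwa : Complex.abs ((starRingEnd ℂ) z) < 1 := by rwa [Complex.abs_conj]
  have hζza : Complex.abs (ζ z) < 1 := hζa z hz
  have htabs : Complex.abs ((t:ℂ)) < 1 := by rw [Complex.abs_ofReal]; exact htlt
  have hcμabs : Complex.abs ((starRingEnd ℂ) μ) = 1 := by rw [Complex.abs_conj, hμabs]
  have htcμ : Complex.abs ((t:ℂ) * (starRingEnd ℂ) μ) < 1 := by
    rw [map_mul, hcμabs, mul_one]; exact htabs
  have hD1 : 1 - (t:ℂ) * (starRingEnd ℂ) μ * ζ z ≠ 0 :=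
    one_sub_ne' (mul_abs_lt htcμ hζza)
  have hD2c : 1 - (t:ℂ) * μ * (starRingEnd ℂ) z ≠ 0 := by
    apply one_sub_ne'
    apply mul_abs_lt _ hwa
    rw [map_mul, hμabs, mul_one, Complex.abs_ofReal]; exact htlt
  have hDd : 1 - (sr:ℂ) * μ * (starRingEnd ℂ) z ≠ 0 := by
    apply one_sub_ne'
    apply mul_abs_lt _ hwa
    rw [map_mul, hμabs, mul_one, Complex.abs_ofReal]; exact hsra
  have key : (ζ z - (t:ℂ) * μ) / (1 - (t:ℂ) * (starRingEnd ℂ) μ * ζ z)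
      = -μ ^ 2 * (((starRingEnd ℂ) z - (t:ℂ) * (starRingEnd ℂ) μ)
          / (1 - (t:ℂ) * μ * (starRingEnd ℂ) z)) := by
    rw [← mul_div_assoc, div_eq_div_iff hD1 hD2c]
    apply mul_right_cancel₀ hDd
    linear_combination
      (1 - μ * (t:ℂ) * (starRingEnd ℂ) z - μ ^ 2 * (starRingEnd ℂ) μ * (t:ℂ) * (starRingEnd ℂ) z
        + μ ^ 2 * ((starRingEnd ℂ) μ) ^ 2 * (t:ℂ) ^ 2) * hN z hz
      + (μ - μ ^ 3 * ((starRingEnd ℂ) z) ^ 2) * hqC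
      + (-μ * (t:ℂ) + μ * (sr:ℂ) + μ * (sr:ℂ) * (t:ℂ) ^ 2
        - μ ^ 2 * (t:ℂ) ^ 2 * (starRingEnd ℂ) z - μ ^ 2 * (sr:ℂ) * (t:ℂ) * (starRingEnd ℂ) z
        + μ ^ 2 * (starRingEnd ℂ) μ * (sr:ℂ) * (t:ℂ) ^ 2
        + μ ^ 3 * (t:ℂ) * ((starRingEnd ℂ) z) ^ 2
        - μ ^ 3 * (starRingEnd ℂ) μ * (t:ℂ) ^ 2 * (starRingEnd ℂ) z
        - μ ^ 3 * (starRingEnd ℂ) μ * (sr:ℂ) * (t:ℂ) * (starRingEnd ℂ) z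
        + μ ^ 3 * ((starRingEnd ℂ) μ) ^ 2 * (sr:ℂ) * (t:ℂ) ^ 2) * hμν
  rw [key, ← mul_assoc, hlamμ]
  simp only [map_mul, map_sub, map_div₀, map_one, Complex.conj_conj, Complex.conj_ofReal]
end

section
/- Let Γ be a compact subset of a connected open set U in a connected Hausdorff topological space Q, with U ≠ Q, such that U ∖ Γ is connected and Q is connected and locally connected. Then Q ∖ Γ is connected. -/
open Set

/-- If `Γ` is compact inside a connected open `U ⊊ Q` with `U \ Γ` connected, `Q` a connected,
locally connected Hausdorff space, then `Q \ Γ` is connected. -/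
theorem stmt10 {Q : Type} [TopologicalSpace Q] [T2Space Q] [ConnectedSpace Q]
    [LocallyConnectedSpace Q] (U Γ : Set Q) (hUopen : IsOpen U) (hUconn : IsConnected U)
    (hUne : U ≠ univ) (hΓcpt : IsCompact Γ) (hΓU : Γ ⊆ U)
    (hconn : IsConnected (U \ Γ)) : IsConnected Γᶜ := by
  have hFopen : IsOpen Γᶜ := hΓcpt.isClosed.isOpen_compl
  have hsub : U \ Γ ⊆ Γᶜ := fun z hz => hz.2
  -- Key: every connected component of Γᶜ contains U \ Γ
  have key : ∀ x ∈ Γᶜ, U \ Γ ⊆ connectedComponentIn Γᶜ x := by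
    intro x hx
    set C := connectedComponentIn Γᶜ x with hC
    have hxC : x ∈ C := mem_connectedComponentIn hx
    have hCopen : IsOpen C := hFopen.connectedComponentIn
    have hCconn : IsPreconnected C := isPreconnected_connectedComponentIn
    have hCF : C ⊆ Γᶜ := connectedComponentIn_subset _ _
    -- C must meet U
    have hmeet : (C ∩ U).Nonempty := by
      by_contra h
      have hCU : C ⊆ Uᶜ := fun z hz hzU => h ⟨z, hz, hzU⟩
      have hclC : closure C ⊆ Γᶜ := by
        have h1 : closure C ⊆ Uᶜ := by
          have := closure_mono hCU
          rwa [closure_eq_iff_isClosed.mpr hUopen.isClosed_compl] at this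
        exact h1.trans (compl_subset_compl.mpr hΓU)
      have hclsub : closure C ⊆ C :=
        hCconn.closure.subset_connectedComponentIn (subset_closure hxC) hclC
      have hCclosed : IsClosed C := closure_subset_iff_isClosed.mp hclsub
      have huniv : C = univ := IsClopen.eq_univ ⟨hCclosed, hCopen⟩ ⟨x, hxC⟩
      obtain ⟨u, hu⟩ := hUconn.nonempty
      exact hCU (huniv ▸ mem_univ u) hu
    obtain ⟨y, hyC, hyU⟩ := hmeet
    have hyF : y ∈ Γᶜ := hCF hyC
    have h1 : U \ Γ ⊆ connectedComponentIn Γᶜ y :=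
      hconn.isPreconnected.subset_connectedComponentIn ⟨hyU, hyF⟩ hsub
    have h2 := connectedComponentIn_eq hyC
    rw [hC, h2]
    exact h1
  obtain ⟨w, hw⟩ := hconn.nonempty
  refine ⟨⟨w, hsub hw⟩, isPreconnected_of_forall w ?_⟩
  intro y hy
  exact ⟨connectedComponentIn Γᶜ y, connectedComponentIn_subset _ _,
    key y hy hw, mem_connectedComponentIn hy, isPreconnected_connectedComponentIn⟩
end

section
/- Let X be a topological space with finitely many connected components. Then the number of connected components of X equals the dimension over 𝔽₂ of the group C(X, {±1}) of continuous functions from X to the two-element multiplicative group {±1} (with pointwise multiplication), viewed as an 𝔽₂-vector space. -/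
open scoped ContinuousMap

/-- The group `C(X, {±1})` of continuous signs, written additively, is an `𝔽₂`-vector space
(every element has order dividing 2). Here `{±1}` is realised as `ℤˣ` with its (discrete)
topology and pointwise multiplication. -/
noncomputable instance signsModule (X : Type) [TopologicalSpace X] :
    Module (ZMod 2) (Additive C(X, ℤˣ)) :=
  AddCommGroup.zmodModule (by
    intro a
    have h : a.toMul * a.toMul = 1 := by
      ext p
      simp [Int.units_mul_self]
    rw [two_nsmul]
    show a.toMul * a.toMul = (1 : C(X, ℤˣ))
    exact h)

/-- `ConnectedComponents X` is T1: each connected component is closed. -/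
instance connectedComponentsT1 (X : Type) [TopologicalSpace X] :
    T1Space (ConnectedComponents X) := by
  constructor
  intro c
  obtain ⟨x, rfl⟩ := ConnectedComponents.surjective_coe c
  rw [← ConnectedComponents.isQuotientMap_coe.isClosed_preimage,
    connectedComponents_preimage_singleton]
  exact isClosed_connectedComponent

/-- The additive group of `ℤˣ` is `ℤ/2ℤ`. -/
def signEquiv : Additive ℤˣ ≃+ ZMod 2 where
  toFun u := if u.toMul = 1 then 0 else 1
  invFun c := Additive.ofMul (if c = 0 then 1 else -1)
  left_inv u := by
    apply Additive.toMul.injective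
    rcases Int.units_eq_one_or u.toMul with h | h <;> simp [h]
  right_inv c := by
    revert c; decide
  map_add' u v := by
    show (if (u.toMul * v.toMul) = 1 then (0:ZMod 2) else 1) =
      (if u.toMul = 1 then 0 else 1) + (if v.toMul = 1 then 0 else 1)
    rcases Int.units_eq_one_or u.toMul with h | h <;>
      rcases Int.units_eq_one_or v.toMul with h' | h' <;>
      rw [h, h'] <;> norm_num <;> decide

/-- Continuous maps to the discrete space `ℤˣ` factor through the (finite, hence discrete)
space of connected components. -/
noncomputable def ccEquiv (X : Type) [TopologicalSpace X] [Finite (ConnectedComponents X)] :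
    C(X, ℤˣ) ≃* (ConnectedComponents X → ℤˣ) where
  toFun f := f.continuous.connectedComponentsLift
  invFun g := ⟨g ∘ ConnectedComponents.mk, (continuous_of_discreteTopology).comp
    ConnectedComponents.continuous_coe⟩
  left_inv f := by ext x; rfl
  right_inv g := by
    funext c
    obtain ⟨x, rfl⟩ := ConnectedComponents.surjective_coe c
    rfl
  map_mul' f g := by
    funext c
    obtain ⟨x, rfl⟩ := ConnectedComponents.surjective_coe c
    rfl

/-- For a topological space with finitely many connected components, the number of connected
components equals the `𝔽₂`-dimension of the group `C(X, {±1})` of continuous functions to the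
two-element multiplicative group `{±1}`. -/
theorem stmt11 (X : Type) [TopologicalSpace X] [Finite (ConnectedComponents X)] :
    Nat.card (ConnectedComponents X) =
      Module.finrank (ZMod 2) (Additive C(X, ℤˣ)) := by
  have := Fintype.ofFinite (ConnectedComponents X)
  have E : Additive C(X, ℤˣ) ≃+ (ConnectedComponents X → ZMod 2) :=
    ((MulEquiv.toAdditive (ccEquiv X)).trans
      (AddEquiv.piAdditive (fun _ : ConnectedComponents X => ℤˣ))).trans
      (AddEquiv.piCongrRight fun _ => signEquiv)
  have L : Additive C(X, ℤˣ) ≃ₗ[ZMod 2] (ConnectedComponents X → ZMod 2) :=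
    { E with map_smul' := ZMod.map_smul E.toAddMonoidHom }
  rw [L.finrank_eq, Module.finrank_pi, Nat.card_eq_fintype_card]
end

section
/- Let H be a sequence (or net) of injective holomorphic functions on a connected open set U ⊆ ℂ converging locally uniformly to a non-constant function ζ. Then ζ is holomorphic and injective, hence a biholomorphism of U onto an open subset of ℂ. -/
open Set

open Metric Filter Topology

/-- Hurwitz-type theorem: a locally uniform limit on a connected open `U ⊆ ℂ` of injective
holomorphic functions which is non-constant is holomorphic and injective, hence a biholomorphism
of `U` onto an open subset of `ℂ`. -/
theorem stmt12 (U : Set ℂ) (hU : IsOpen U) (hUconn : IsConnected U)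
    (H : ℕ → ℂ → ℂ) (hdiff : ∀ n, DifferentiableOn ℂ (H n) U)
    (hinj : ∀ n, InjOn (H n) U) (ζ : ℂ → ℂ)
    (hlim : TendstoLocallyUniformlyOn H ζ Filter.atTop U)
    (hnc : ¬ ∃ c : ℂ, EqOn ζ (fun _ => c) U) :
    DifferentiableOn ℂ ζ U ∧ InjOn ζ U ∧ IsOpen (ζ '' U) ∧
      ∃ g : ℂ → ℂ, DifferentiableOn ℂ g (ζ '' U) ∧ ∀ z ∈ U, g (ζ z) = z := by
  have hζd : DifferentiableOn ℂ ζ U :=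
    hlim.differentiableOn (Filter.Eventually.of_forall hdiff) hU
  have hζa : AnalyticOnNhd ℂ ζ U := hζd.analyticOnNhd hU
  -- non-constancy gives isolated level sets
  have hA : ∀ z₀ ∈ U, ∀ᶠ z in 𝓝[≠] z₀, ζ z ≠ ζ z₀ := by
    intro z₀ hz₀
    rcases (hζa z₀ hz₀).eventually_eq_or_eventually_ne
        (analyticAt_const (v := ζ z₀)) with h | h
    · exact absurd ⟨ζ z₀, hζa.eqOn_of_preconnected_of_eventuallyEq analyticOnNhd_const
        hUconn.isPreconnected hz₀ h⟩ hnc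
    · exact h
  -- Hurwitz argument: injectivity of the limit
  have hinjζ : InjOn ζ U := by
    intro a ha b hb hab
    by_contra hne
    have hdab : 0 < dist a b := dist_pos.mpr hne
    obtain ⟨ε, hε, hεball⟩ : ∃ ε > 0, ∀ z, dist z b < ε → z ≠ b → ζ z ≠ ζ b := by
      have h := hA b hb
      rw [eventually_nhdsWithin_iff] at h
      rcases Metric.eventually_nhds_iff.mp h with ⟨ε, hε, h⟩
      exact ⟨ε, hε, fun z hz hzb => h hz hzb⟩
    obtain ⟨ε₁, hε₁, hball⟩ := Metric.isOpen_iff.mp hU b hb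
    set r := min (min (ε / 2) (ε₁ / 2)) (dist a b / 2) with hrdef
    have hr : 0 < r := lt_min (lt_min (by positivity) (by positivity)) (by positivity)
    have hrε : r < ε := (min_le_left _ _).trans_lt (by
      exact (min_le_left _ _).trans_lt (by linarith))
    have hrε₁ : r < ε₁ := (min_le_left _ _).trans_lt (by
      exact (min_le_right _ _).trans_lt (by linarith))
    have hrab : r < dist a b := (min_le_right _ _).trans_lt (by linarith)
    have hrU : closedBall b r ⊆ U := fun z hz =>
      hball (lt_of_le_of_lt (mem_closedBall.mp hz) hrε₁)
    have hra : ∀ z ∈ closedBall b r, z ≠ a := by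
      intro z hz h
      subst h
      exact absurd (mem_closedBall.mp hz) (not_le.mpr (hrab.trans_le (by rw [dist_comm])))
    -- minimum of ‖ζ z - ζ a‖ on the sphere
    have hsph : ∀ z ∈ sphere b r, ζ z ≠ ζ a := by
      intro z hz
      rw [hab]
      have hd : dist z b = r := mem_sphere.mp hz
      exact hεball z (hd ▸ hrε) (by intro h; subst h; simp [hd ▸ hr.ne'] at hd; exact hr.ne' hd.symm)
    have hcont : ContinuousOn (fun z => ‖ζ z - ζ a‖) (sphere b r) :=
      ((hζd.continuousOn.mono (sphere_subset_closedBall.trans hrU)).sub continuousOn_const).norm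
    obtain ⟨z₀, hz₀s, hz₀min⟩ := (isCompact_sphere b r).exists_isMinOn
      (NormedSpace.sphere_nonempty.mpr hr.le) hcont
    set m := ‖ζ z₀ - ζ a‖ with hmdef
    have hm : 0 < m := norm_pos_iff.mpr (sub_ne_zero.mpr (hsph z₀ hz₀s))
    -- eventual uniform closeness
    have hu : TendstoUniformlyOn H ζ atTop (sphere b r) := by
      have := hlim.mono (sphere_subset_closedBall.trans hrU)
      rwa [tendstoLocallyUniformlyOn_iff_tendstoUniformlyOn_of_compact (isCompact_sphere b r)]
        at this
    have h1 : ∀ᶠ n in atTop, ∀ z ∈ sphere b r, dist (ζ z) (H n z) < m / 4 :=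
      Metric.tendstoUniformlyOn_iff.mp hu (m / 4) (by positivity)
    have h2 : ∀ᶠ n in atTop, dist (H n a) (ζ a) < m / 4 :=
      (Metric.tendsto_nhds.mp (hlim.tendsto_at ha)) (m / 4) (by positivity)
    have h3 : ∀ᶠ n in atTop, dist (H n b) (ζ b) < m / 4 :=
      (Metric.tendsto_nhds.mp (hlim.tendsto_at hb)) (m / 4) (by positivity)
    obtain ⟨n, hn1, hn2, hn3⟩ := (h1.and (h2.and h3)).exists
    -- lower bound on the sphere
    have hlow : ∀ z ∈ sphere b r, m / 2 ≤ ‖H n z - H n a‖ := by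
      intro z hz
      have e1 : ‖H n z - ζ z‖ < m / 4 := by
        rw [← dist_eq_norm, dist_comm]; exact hn1 z hz
      have e2 : ‖H n a - ζ a‖ < m / 4 := by rw [← dist_eq_norm]; exact hn2
      have e3 : m ≤ ‖ζ z - ζ a‖ := hz₀min hz
      have : ‖ζ z - ζ a‖ ≤ ‖H n z - H n a‖ + ‖H n z - ζ z‖ + ‖H n a - ζ a‖ := by
        have : ζ z - ζ a = (H n z - H n a) - (H n z - ζ z) + (H n a - ζ a) := by ring
        rw [this]
        exact (norm_add_le _ _).trans (by gcongr; exact norm_sub_le _ _)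
      linarith
    -- maximum modulus on the auxiliary function
    set F : ℂ → ℂ := fun z => (H n z - H n a)⁻¹ with hFdef
    have hne0 : ∀ z ∈ closedBall b r, H n z - H n a ≠ 0 := by
      intro z hz
      refine sub_ne_zero.mpr fun h => hra z hz (hinj n (hrU hz) ha h)
    have hFd : DifferentiableOn ℂ F (closedBall b r) :=
      (((hdiff n).mono hrU).sub (differentiableOn_const _)).inv hne0
    have hFc : DiffContOnCl ℂ F (ball b r) := by
      refine DifferentiableOn.diffContOnCl ?_
      rwa [closure_ball b hr.ne']
    have hbd : ‖F b‖ ≤ (m / 2)⁻¹ := by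
      refine Complex.norm_le_of_forall_mem_frontier_norm_le isBounded_ball hFc ?_ ?_
      · intro z hz
        rw [frontier_ball b hr.ne'] at hz
        have h0 : (0:ℝ) < m / 2 := by positivity
        rw [hFdef]
        simp only [norm_inv]
        exact inv_anti₀ h0 (hlow z hz)
      · rw [closure_ball b hr.ne']
        exact mem_closedBall_self hr.le
    -- but F b is large
    have hfb : ‖H n b - H n a‖ < m / 2 := by
      have : H n b - H n a = (H n b - ζ b) - (H n a - ζ a) + (ζ b - ζ a) := by ring
      have hz0 : ζ b - ζ a = 0 := by rw [hab, sub_self]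
      rw [this, hz0, add_zero]
      calc ‖(H n b - ζ b) - (H n a - ζ a)‖ ≤ ‖H n b - ζ b‖ + ‖H n a - ζ a‖ := norm_sub_le _ _
        _ < m / 4 + m / 4 := by
            rw [← dist_eq_norm, ← dist_eq_norm]; exact add_lt_add hn3 hn2
        _ = m / 2 := by ring
    have hfb0 : 0 < ‖H n b - H n a‖ :=
      norm_pos_iff.mpr (hne0 b (mem_closedBall_self hr.le))
    have : m / 2 ≤ ‖H n b - H n a‖ := by
      rw [hFdef] at hbd
      simp only [norm_inv] at hbd
      exact (inv_le_inv₀ (by positivity) (by positivity)).mp hbd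
    linarith
  -- open mapping theorem
  have homap : ∀ s ⊆ U, IsOpen s → IsOpen (ζ '' s) := by
    rcases hζa.is_constant_or_isOpen hUconn.isPreconnected with ⟨c, hc⟩ | h
    · exact absurd ⟨c, fun z hz => hc z hz⟩ hnc
    · exact h
  have hVopen : IsOpen (ζ '' U) := homap U subset_rfl hU
  refine ⟨hζd, hinjζ, hVopen, ?_⟩
  -- the inverse function
  set g := Function.invFunOn ζ U with hgdef
  have hgl : ∀ z ∈ U, g (ζ z) = z := fun z hz => hinjζ.leftInvOn_invFunOn hz
  refine ⟨g, ?_, hgl⟩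
  -- continuity of g on the image
  have hgc : ∀ z ∈ U, ContinuousAt g (ζ z) := by
    intro z hz
    rw [ContinuousAt, hgl z hz]
    intro N hN
    rw [Filter.mem_map]
    obtain ⟨O, hON, hOopen, hzO⟩ := _root_.mem_nhds_iff.mp hN
    have hmem : ζ '' (O ∩ U) ∈ 𝓝 (ζ z) :=
      (homap _ inter_subset_right (hOopen.inter hU)).mem_nhds ⟨z, ⟨hzO, hz⟩, rfl⟩
    refine Filter.mem_of_superset hmem ?_
    rintro w ⟨z', ⟨hz'O, hz'U⟩, rfl⟩
    show g (ζ z') ∈ N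
    rw [hgl z' hz'U]
    exact hON hz'O
  -- differentiability at points with nonvanishing derivative
  have hgd : ∀ z ∈ U, deriv ζ z ≠ 0 → DifferentiableAt ℂ g (ζ z) := by
    intro z hz hdz
    obtain ⟨p, hp⟩ := hζa z hz
    have hsd : HasStrictDerivAt ζ (deriv ζ z) z := by
      have h2 := hp.hasStrictDerivAt
      rwa [h2.hasDerivAt.deriv]
    have hF := hsd.hasStrictFDerivAt_equiv hdz
    have hev1 : ∀ᶠ w in 𝓝 (ζ z), ζ (hF.localInverse ζ _ z w) = w := hF.eventually_right_inverse
    have hev2 : ∀ᶠ w in 𝓝 (ζ z), hF.localInverse ζ _ z w ∈ U :=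
      hF.localInverse_tendsto.eventually_mem (hU.mem_nhds hz)
    have hev3 : ∀ᶠ w in 𝓝 (ζ z), w ∈ ζ '' U :=
      Filter.eventually_of_mem (hVopen.mem_nhds ⟨z, hz, rfl⟩) fun w hw => hw
    have heq : g =ᶠ[𝓝 (ζ z)] hF.localInverse ζ _ z := by
      filter_upwards [hev1, hev2, hev3] with w h1 h2 h3
      obtain ⟨z', hz', rfl⟩ := h3
      rw [hgl z' hz']
      exact (hinjζ h2 hz' h1).symm
    exact hF.to_localInverse.differentiableAt.congr_of_eventuallyEq heq
  -- differentiability of g everywhere on the image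
  have hgdiffV : ∀ w ∈ ζ '' U, DifferentiableAt ℂ g w := by
    rintro w ⟨z, hz, rfl⟩
    by_cases hdz : deriv ζ z = 0
    swap
    · exact hgd z hz hdz
    have hda : AnalyticOnNhd ℂ (deriv ζ) U := hζa.deriv
    rcases (hda z hz).eventually_eq_zero_or_eventually_ne_zero with h0 | h0
    · -- derivative vanishes near z : ζ locally constant, contradiction
      exfalso
      obtain ⟨ρ, hρ, hballd⟩ := Metric.eventually_nhds_iff.mp h0
      obtain ⟨ρ₁, hρ₁, hballU⟩ := Metric.isOpen_iff.mp hU z hz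
      set ρ₂ := min ρ ρ₁ with hρ₂def
      have hρ₂ : 0 < ρ₂ := lt_min hρ hρ₁
      have hBU : ball z ρ₂ ⊆ U :=
        fun y hy => hballU (mem_ball.mpr (lt_of_lt_of_le (mem_ball.mp hy) (min_le_right _ _)))
      have hconst : ∀ y ∈ ball z ρ₂, ζ y = ζ z := by
        intro y hy
        refine (convex_ball z ρ₂).is_const_of_fderivWithin_eq_zero
          (hζd.mono hBU) ?_ hy (mem_ball_self hρ₂)
        intro x hx
        rw [fderivWithin_of_isOpen isOpen_ball hx]
        have hd0 : deriv ζ x = 0 := hballd (lt_of_lt_of_le (mem_ball.mp hx) (min_le_left _ _))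
        ext1
        simp [← toSpanSingleton_deriv, hd0]
      -- contradiction with identity theorem
      have hevc : ∀ᶠ y in 𝓝 z, ζ y = ζ z :=
        Filter.eventually_of_mem (ball_mem_nhds z hρ₂) hconst
      exact hnc ⟨ζ z, hζa.eqOn_of_preconnected_of_eventuallyEq analyticOnNhd_const
        hUconn.isPreconnected hz hevc⟩
    · -- derivative nonzero on punctured neighborhood : removable singularity
      rw [eventually_nhdsWithin_iff] at h0
      obtain ⟨ρ, hρ, hballd⟩ := Metric.eventually_nhds_iff.mp h0
      obtain ⟨ρ₁, hρ₁, hballU⟩ := Metric.isOpen_iff.mp hU z hz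
      set ρ₂ := min ρ ρ₁ with hρ₂def
      have hρ₂ : 0 < ρ₂ := lt_min hρ hρ₁
      have hBU : ball z ρ₂ ⊆ U :=
        fun y hy => hballU (mem_ball.mpr (lt_of_lt_of_le (mem_ball.mp hy) (min_le_right _ _)))
      have hW : IsOpen (ζ '' ball z ρ₂) := homap _ hBU isOpen_ball
      refine (Complex.analyticAt_of_differentiable_on_punctured_nhds_of_continuousAt
        ?_ (hgc z hz)).differentiableAt
      rw [eventually_nhdsWithin_iff]
      have hmem : ζ '' ball z ρ₂ ∈ 𝓝 (ζ z) := hW.mem_nhds ⟨z, mem_ball_self hρ₂, rfl⟩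
      filter_upwards [hmem] with w hw hwne
      obtain ⟨y, hy, rfl⟩ := hw
      have hyz : y ≠ z := fun h => hwne (by rw [h]; rfl)
      exact hgd y (hBU hy) (hballd (lt_of_lt_of_le (mem_ball.mp hy) (min_le_left _ _)) hyz)
  exact fun w hw => (hgdiffV w hw).differentiableWithinAt
end
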